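/- arXiv:2402.06298 — 7 statements merged into one kernel-verified Lean document; each statement's English description precedes it below -/
import Mathlib

section
/- There exist weighted majority games whose union (as simple games) is not a weighted majority game: for N = {1,2,3,4,5}, the union of the simple games induced by [13; 8,6,5,1,0] and [15; 1,2,5,10,10] is not representable by any quota and nonnegative weights. -/
open scoped Classical

noncomputable section

/-- A coalition `S` is winning in the weighted majority game `[q; w]`. -/
def winning {ι : Type*} (q : ℝ) (w : ι → ℝ) (S : Finset ι) : Prop :=
  q ≤ ∑ i ∈ S, w i

/-- `S` is a minimal winning coalition of `[q; w]`. -/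
def MWC {ι : Type*} (q : ℝ) (w : ι → ℝ) (S : Finset ι) : Prop :=
  winning q w S ∧ ∀ T ⊂ S, ¬ winning q w T

/-- The set `M(q;w)` of minimal winning coalitions. -/
def Mset {ι : Type*} [Fintype ι] (q : ℝ) (w : ι → ℝ) : Finset (Finset ι) :=
  Finset.univ.filter (MWC q w)

/-- The set `M_i(q;w)` of minimal winning coalitions containing `i`. -/
def Mi {ι : Type*} [Fintype ι] (q : ℝ) (w : ι → ℝ) (i : ι) : Finset (Finset ι) :=
  (Mset q w).filter (fun S => i ∈ S)

/-- `[q;w]` is a weighted majority game: positive quota, nonnegative weights,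
grand coalition winning. -/
def WMG {ι : Type*} [Fintype ι] (q : ℝ) (w : ι → ℝ) : Prop :=
  0 < q ∧ (∀ i, 0 ≤ w i) ∧ q ≤ ∑ i, w i

/-- The Colomer-Martínez power index. -/
def CM {ι : Type*} [Fintype ι] (q : ℝ) (w : ι → ℝ) (i : ι) : ℝ :=
  (1 / ((Mset q w).card : ℝ)) * ∑ S ∈ Mi q w i, w i / (∑ j ∈ S, w j)

/-- The Holler-Colomer-Martínez power index. -/
def HCM {ι : Type*} [Fintype ι] (q : ℝ) (w : ι → ℝ) (i : ι) : ℝ :=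
  (((Mi q w i).card : ℝ) * w i) / ∑ j, ((Mi q w j).card : ℝ) * w j

theorem union_not_weighted :
    ¬ ∃ (q : ℝ) (w : Fin 5 → ℝ), 0 < q ∧ (∀ i, 0 ≤ w i) ∧
      ∀ S : Finset (Fin 5),
        (winning 13 ![8, 6, 5, 1, 0] S ∨ winning 15 ![1, 2, 5, 10, 10] S) ↔
          winning q w S := by
  rintro ⟨q, w, hq, hw, h⟩
  have h1 : winning q w {0, 1} := (h {0, 1}).mp (Or.inl (by
    simp [winning, Finset.sum_insert]; norm_num))
  have h2 : winning q w {3, 4} := (h {3, 4}).mp (Or.inr (by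
    simp [winning, Finset.sum_insert]; norm_num))
  have h3 : ¬ winning q w {0, 3} := fun hw' => by
    have := (h {0, 3}).mpr hw'
    rcases this with h' | h' <;> simp [winning, Finset.sum_insert] at h' <;> norm_num at h'
  have h4 : ¬ winning q w {1, 4} := fun hw' => by
    have := (h {1, 4}).mpr hw'
    rcases this with h' | h' <;> simp [winning, Finset.sum_insert] at h' <;> norm_num at h'
  simp only [winning, not_le, Finset.sum_pair (by decide : (0:Fin 5) ≠ 1),
    Finset.sum_pair (by decide : (3:Fin 5) ≠ 4), Finset.sum_pair (by decide : (0:Fin 5) ≠ 3),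
    Finset.sum_pair (by decide : (1:Fin 5) ≠ 4)] at h1 h2 h3 h4
  linarith
end
end

section
/- If weighted majority games [q^1;w^1],...,[q^p;w^p] on the same player set N are WM-mergeable, then the set of minimal winning coalitions of the WM-union game equals the disjoint union of the sets of minimal winning coalitions of the component games: M(q^⋎;w^⋎) = ⋃_{k=1}^p M(q^k;w^k) and M(q^k;w^k) ∩ M(q^ℓ;w^ℓ) = ∅ for all k ≠ ℓ. -/
open scoped Classical

noncomputable section

/-- `[qU; wU]` is the WM-union of the games `[q k; w k]`: the quota is the
minimum of the quotas and the weights are the componentwise maxima. -/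
def WMUnion {ι : Type*} {p : ℕ} (q : Fin p → ℝ) (w : Fin p → ι → ℝ)
    (qU : ℝ) (wU : ι → ℝ) : Prop :=
  IsLeast (Set.range q) qU ∧ ∀ i, IsGreatest (Set.range fun k => w k i) (wU i)

/-- The games `[q k; w k]` are WM-mergeable, with WM-union `[qU; wU]`. -/
def Mergeable {ι : Type*} [Fintype ι] {p : ℕ} (q : Fin p → ℝ) (w : Fin p → ι → ℝ)
    (qU : ℝ) (wU : ι → ℝ) : Prop :=
  WMUnion q w qU wU ∧
  (∀ k l, q k = q l) ∧
  (∀ i k l, w k i ≠ w l i → w k i = 0 ∨ w l i = 0) ∧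
  (∀ S : Finset ι, S ≠ Finset.univ → (∀ k, ∑ i ∈ S, w k i < q k) →
    ∑ i ∈ S, wU i < qU) ∧
  (Mset qU wU).card = ∑ k, (Mset (q k) (w k)).card

theorem Mset_union_eq {ι : Type*} [Fintype ι] {p : ℕ} (hp : 1 < p)
    (q : Fin p → ℝ) (w : Fin p → ι → ℝ) (qU : ℝ) (wU : ι → ℝ)
    (hWMG : ∀ k, WMG (q k) (w k)) (hm : Mergeable q w qU wU) :
    Mset qU wU = Finset.univ.biUnion (fun k => Mset (q k) (w k)) ∧
      ∀ k l, k ≠ l → Mset (q k) (w k) ∩ Mset (q l) (w l) = ∅ := by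
  classical
  obtain ⟨hWU, hqeq, hw0, h3, h4⟩ := hm
  have hq : ∀ k, qU = q k := by
    intro k
    obtain ⟨⟨k0, hk0⟩, _⟩ := hWU.1
    rw [← hk0]; exact hqeq k0 k
  have hwle : ∀ k i, w k i ≤ wU i := fun k i => (hWU.2 i).2 ⟨k, rfl⟩
  have hCwin : ∀ k S, winning (q k) (w k) S → winning qU wU S := by
    intro k S h
    unfold winning at *
    calc qU = q k := hq k
      _ ≤ ∑ i ∈ S, w k i := h
      _ ≤ ∑ i ∈ S, wU i := Finset.sum_le_sum (fun i _ => hwle k i)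
  have hD : ∀ S, winning qU wU S → ∃ k, winning (q k) (w k) S := by
    intro S h
    by_contra hc
    push_neg at hc
    simp only [winning, not_le] at hc
    by_cases hS : S = Finset.univ
    · have k : Fin p := ⟨0, by omega⟩
      have := (hWMG k).2.2
      subst hS
      exact absurd this (not_le.2 (hc k))
    · exact absurd h (not_le.2 (h3 S hS hc))
  set A : Fin p → Finset (Finset ι) := fun k => Mset (q k) (w k) with hA
  have hsub : Mset qU wU ⊆ Finset.univ.biUnion A := by
    intro S hS
    simp only [Mset, MWC, Finset.mem_filter, Finset.mem_univ, true_and] at hS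
    obtain ⟨k, hk⟩ := hD S hS.1
    simp only [Finset.mem_biUnion, Finset.mem_univ, hA, Mset, MWC, Finset.mem_filter,
      true_and]
    exact ⟨k, hk, fun T hT hw => hS.2 T hT (hCwin k T hw)⟩
  have hle1 : (Finset.univ.biUnion A).card ≤ ∑ k, (A k).card := Finset.card_biUnion_le
  have heq : Mset qU wU = Finset.univ.biUnion A := by
    refine Finset.eq_of_subset_of_card_le hsub ?_
    rw [h4]; exact hle1
  have hcardB : (Finset.univ.biUnion A).card = ∑ k, (A k).card := by
    rw [← heq, h4]
  refine ⟨heq, ?_⟩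
  intro k l hkl
  by_contra hne
  rw [← Finset.not_nonempty_iff_eq_empty, not_not] at hne
  obtain ⟨S, hS⟩ := hne
  set R : Finset (Fin p) := (Finset.univ.erase k).erase l with hR
  have hsplit : ∑ m, (A m).card = (A k).card + ((A l).card + ∑ m ∈ R, (A m).card) := by
    rw [← Finset.add_sum_erase _ _ (Finset.mem_univ k)]
    congr 1
    rw [← Finset.add_sum_erase _ _ (Finset.mem_erase.2 ⟨Ne.symm hkl, Finset.mem_univ l⟩)]
  have hcover : Finset.univ.biUnion A ⊆ (A k ∪ A l) ∪ R.biUnion A := by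
    intro T hT
    simp only [Finset.mem_biUnion, Finset.mem_univ, true_and] at hT
    obtain ⟨m, hmT⟩ := hT
    by_cases hmk : m = k
    · subst hmk; exact Finset.mem_union_left _ (Finset.mem_union_left _ hmT)
    by_cases hml : m = l
    · subst hml; exact Finset.mem_union_left _ (Finset.mem_union_right _ hmT)
    · exact Finset.mem_union_right _ (Finset.mem_biUnion.2
        ⟨m, Finset.mem_erase.2 ⟨hml, Finset.mem_erase.2 ⟨hmk, Finset.mem_univ m⟩⟩, hmT⟩)
  have hlt : (A k ∪ A l).card < (A k).card + (A l).card := by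
    have h1 := Finset.card_union_add_card_inter (A k) (A l)
    have h2 : 0 < (A k ∩ A l).card := Finset.card_pos.2 ⟨S, hS⟩
    omega
  have hchain : (Finset.univ.biUnion A).card < ∑ m, (A m).card := by
    calc (Finset.univ.biUnion A).card ≤ ((A k ∪ A l) ∪ R.biUnion A).card :=
          Finset.card_le_card hcover
      _ ≤ (A k ∪ A l).card + (R.biUnion A).card := Finset.card_union_le _ _
      _ ≤ (A k ∪ A l).card + ∑ m ∈ R, (A m).card :=
          Nat.add_le_add_left Finset.card_biUnion_le _
      _ < (A k).card + (A l).card + ∑ m ∈ R, (A m).card :=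
          Nat.add_lt_add_right hlt _
      _ = ∑ m, (A m).card := by rw [hsplit]; ring
  omega
end
end

section
/- For WM-mergeable weighted majority games, every minimal winning coalition of a component game is a minimal winning coalition of the WM-union game: if [q^1;w^1],...,[q^p;w^p] are WM-mergeable and S ∈ M(q^k;w^k) for some k, then S ∈ M(q^⋎;w^⋎). -/
open scoped Classical

noncomputable section

lemma exists_mwc_subset {ι : Type*} (q : ℝ) (w : ι → ℝ) :
    ∀ S : Finset ι, winning q w S → ∃ T, T ⊆ S ∧ MWC q w T := by
  intro S
  induction S using Finset.strongInduction with
  | _ S ih =>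
    intro hS
    by_cases h : ∀ T ⊂ S, ¬ winning q w T
    · exact ⟨S, subset_rfl, hS, h⟩
    · push_neg at h
      obtain ⟨T, hTS, hT⟩ := h
      obtain ⟨T', hT'⟩ := ih T hTS hT
      exact ⟨T', hT'.1.trans hTS.subset, hT'.2⟩

theorem MWC_component_subset_union {ι : Type*} [Fintype ι] {p : ℕ} (hp : 1 < p)
    (q : Fin p → ℝ) (w : Fin p → ι → ℝ) (qU : ℝ) (wU : ι → ℝ)
    (hWMG : ∀ k, WMG (q k) (w k)) (hm : Mergeable q w qU wU)
    (k : Fin p) (S : Finset ι) (hS : S ∈ Mset (q k) (w k)) :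
    S ∈ Mset qU wU := by
  obtain ⟨⟨⟨hqmem, hqlb⟩, hwgr⟩, hq, hwz, hlose, hcard⟩ := hm
  -- qU equals every quota
  have hqU : ∀ l, qU = q l := by
    intro l
    obtain ⟨k0, hk0⟩ := hqmem
    rw [← hk0]; exact hq k0 l
  -- weight bounds
  have hwU1 : ∀ i l, w l i ≤ wU i := fun i l => (hwgr i).2 ⟨l, rfl⟩
  have hwU0 : ∀ i, 0 ≤ wU i := by
    intro i
    obtain ⟨l, hl⟩ := (hwgr i).1
    rw [← hl]; exact (hWMG l).2.1 i
  -- winning in a component implies winning in the union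
  have hwin : ∀ (l : Fin p) (T : Finset ι), winning (q l) (w l) T → winning qU wU T := by
    intro l T hT
    calc qU = q l := hqU l
    _ ≤ ∑ i ∈ T, w l i := hT
    _ ≤ ∑ i ∈ T, wU i := Finset.sum_le_sum (fun i _ => hwU1 i l)
  -- the union of the component MWC sets
  set U : Finset (Finset ι) := Finset.univ.biUnion (fun l => Mset (q l) (w l)) with hU
  have hsub : Mset qU wU ⊆ U := by
    intro T hT
    rw [Mset, Finset.mem_filter] at hT
    obtain ⟨-, hTwin, hTmin⟩ := hT
    by_cases huniv : T = Finset.univ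
    · -- univ is MWC in component k
      apply Finset.mem_biUnion.2 ⟨k, Finset.mem_univ k, ?_⟩
      rw [Mset, Finset.mem_filter]
      refine ⟨Finset.mem_univ _, ?_, ?_⟩
      · rw [huniv]; exact (hWMG k).2.2
      · intro T' hT' hT'win
        exact hTmin T' hT' (hwin k T' hT'win)
    · -- T is winning in some component
      have : ¬ ∀ l, ∑ i ∈ T, w l i < q l := by
        intro h
        exact absurd hTwin (not_le.2 (hlose T huniv h))
      push_neg at this
      obtain ⟨l, hl⟩ := this
      obtain ⟨T', hT'sub, hT'mwc⟩ := exists_mwc_subset (q l) (w l) T hl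
      have hT'win : winning qU wU T' := hwin l T' hT'mwc.1
      have : T' = T := by
        rcases hT'sub.ssubset_or_eq with h | h
        · exact absurd hT'win (hTmin T' h)
        · exact h
      subst this
      exact Finset.mem_biUnion.2 ⟨l, Finset.mem_univ l,
        Finset.mem_filter.2 ⟨Finset.mem_univ _, hT'mwc⟩⟩
  have hcardle : U.card ≤ (Mset qU wU).card := by
    rw [hcard]
    exact Finset.card_biUnion_le
  have heq : Mset qU wU = U := Finset.eq_of_subset_of_card_le hsub hcardle
  rw [heq]
  exact Finset.mem_biUnion.2 ⟨k, Finset.mem_univ k, hS⟩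
end
end

section
/- The Colomer-Martínez power index satisfies DP-weighted mergeability: if [q^1;w^1],...,[q^p;w^p] are WM-mergeable weighted majority games with WM-union game [q^⋎;w^⋎], then CM(q^⋎;w^⋎) = (Σ_{k=1}^p |M(q^k;w^k)| · CM(q^k;w^k)) / |M(q^⋎;w^⋎)|. -/
open scoped Classical

noncomputable section

theorem CM_DPMw {ι : Type*} [Fintype ι] {p : ℕ} (hp : 1 < p)
    (q : Fin p → ℝ) (w : Fin p → ι → ℝ) (qU : ℝ) (wU : ι → ℝ)
    (hWMG : ∀ k, WMG (q k) (w k)) (hm : Mergeable q w qU wU) :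
    ∀ i, CM qU wU i =
      (∑ k, ((Mset (q k) (w k)).card : ℝ) * CM (q k) (w k) i) /
        ((Mset qU wU).card : ℝ) := by
  intro i
  obtain ⟨⟨⟨hqmem, hqlb⟩, hwU⟩, hqeq, hw0, hlose, hcard⟩ := hm
  obtain ⟨k0, hk0⟩ := hqmem
  have hq : ∀ k, q k = qU := fun k => (hqeq k k0).trans hk0
  have hwle : ∀ k j, w k j ≤ wU j := fun k j => (hwU j).2 ⟨k, rfl⟩
  -- weight agreement on minimal winning coalitions
  have hWA : ∀ k, ∀ S ∈ Mset (q k) (w k), ∀ j ∈ S, w k j = wU j := by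
    intro k S hS j hj
    rw [Mset, Finset.mem_filter] at hS
    obtain ⟨-, hSw, hSmin⟩ := hS
    by_contra hne
    obtain ⟨l, hl⟩ := (hwU j).1
    have hkl : w k j ≠ w l j := fun h => hne (h.trans hl)
    have hk0' : w k j = 0 := by
      rcases hw0 j k l hkl with h | h
      · exact h
      · have hl' : w l j = wU j := hl
        exact le_antisymm (by rw [← h, hl']; exact hwle k j) ((hWMG k).2.1 j)
    refine hSmin (S.erase j) (Finset.erase_ssubset hj) ?_
    unfold winning
    rw [Finset.sum_erase_eq_sub hj, hk0', sub_zero]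
    exact hSw
  -- every minimal winning coalition of the union is minimal winning in some component
  have hsub : ∀ S ∈ Mset qU wU, ∃ k, S ∈ Mset (q k) (w k) := by
    intro S hS
    rw [Mset, Finset.mem_filter] at hS
    obtain ⟨-, hSw, hSmin⟩ := hS
    by_cases hwin : ∃ l, q l ≤ ∑ j ∈ S, w l j
    · obtain ⟨l, hl⟩ := hwin
      refine ⟨l, ?_⟩
      rw [Mset, Finset.mem_filter]
      refine ⟨Finset.mem_univ _, hl, ?_⟩
      intro T hT hTw
      refine hSmin T hT ?_
      unfold winning at hTw ⊢
      calc qU = q l := (hq l).symm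
        _ ≤ ∑ j ∈ T, w l j := hTw
        _ ≤ ∑ j ∈ T, wU j := Finset.sum_le_sum fun j _ => hwle l j
    · push_neg at hwin
      by_cases hSuniv : S = Finset.univ
      · exact absurd ((hWMG k0).2.2) (by subst hSuniv; exact not_le.2 (hwin k0))
      · exact absurd hSw (not_le.2 (hlose S hSuniv hwin))
  -- the big union
  set B : Finset (Finset ι) := Finset.univ.biUnion (fun k => Mset (q k) (w k)) with hB
  have hMB : Mset qU wU ⊆ B := by
    intro S hS
    obtain ⟨k, hk⟩ := hsub S hS
    exact Finset.mem_biUnion.2 ⟨k, Finset.mem_univ _, hk⟩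
  have hcardB : B.card ≤ ∑ k, (Mset (q k) (w k)).card := Finset.card_biUnion_le
  have hBeq : Mset qU wU = B :=
    Finset.eq_of_subset_of_card_le hMB (hcard ▸ hcardB)
  have hcardB' : B.card = ∑ k, (Mset (q k) (w k)).card := by
    rw [← hBeq, hcard]
  have hfe : ∀ k : Fin p, B.filter (fun S => S ∈ Mset (q k) (w k)) = Mset (q k) (w k) := by
    intro k; ext S
    simp only [Finset.mem_filter]
    exact ⟨fun h => h.2, fun h => ⟨Finset.mem_biUnion.2 ⟨k, Finset.mem_univ _, h⟩, h⟩⟩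
  -- double counting
  have hdc : ∑ S ∈ B, (Finset.univ.filter (fun k => S ∈ Mset (q k) (w k))).card
      = ∑ k, (Mset (q k) (w k)).card := by
    simp_rw [Finset.card_filter]
    rw [Finset.sum_comm]
    refine Finset.sum_congr rfl fun k _ => ?_
    rw [← Finset.card_filter, hfe]
  have hcount : ∀ S ∈ B, (Finset.univ.filter (fun k => S ∈ Mset (q k) (w k))).card = 1 := by
    have hge : ∀ S ∈ B, 1 ≤ (Finset.univ.filter (fun k => S ∈ Mset (q k) (w k))).card := by
      intro S hS
      obtain ⟨k, -, hk⟩ := Finset.mem_biUnion.1 hS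
      exact Finset.card_pos.2 ⟨k, Finset.mem_filter.2 ⟨Finset.mem_univ _, hk⟩⟩
    have hsum : ∑ S ∈ B, (1 : ℕ)
        = ∑ S ∈ B, (Finset.univ.filter (fun k => S ∈ Mset (q k) (w k))).card := by
      rw [hdc, Finset.sum_const, smul_eq_mul, mul_one, hcardB']
    intro S hS
    exact ((Finset.sum_eq_sum_iff_of_le hge).1 hsum S hS).symm
  -- pairwise disjointness of the component Msets
  have hdisj : ∀ k l : Fin p, k ≠ l → Disjoint (Mset (q k) (w k)) (Mset (q l) (w l)) := by
    intro k l hkl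
    rw [Finset.disjoint_left]
    intro S hSk hSl
    have hSB : S ∈ B := Finset.mem_biUnion.2 ⟨k, Finset.mem_univ _, hSk⟩
    have h2 : ({k, l} : Finset (Fin p)) ⊆
        Finset.univ.filter (fun k => S ∈ Mset (q k) (w k)) := by
      intro x hx
      rcases Finset.mem_insert.1 hx with h | h
      · subst h; exact Finset.mem_filter.2 ⟨Finset.mem_univ _, hSk⟩
      · rw [Finset.mem_singleton] at h; subst h
        exact Finset.mem_filter.2 ⟨Finset.mem_univ _, hSl⟩
    have := Finset.card_le_card h2
    rw [hcount S hSB, Finset.card_insert_of_notMem (by simpa using hkl),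
      Finset.card_singleton] at this
    omega
  -- decompose the Mi of the union
  have hMi : Mi qU wU i = Finset.univ.biUnion (fun k => Mi (q k) (w k) i) := by
    rw [Mi, hBeq, hB, Finset.filter_biUnion]
    rfl
  have hsumMi : ∑ S ∈ Mi qU wU i, wU i / (∑ j ∈ S, wU j)
      = ∑ k, ∑ S ∈ Mi (q k) (w k) i, w k i / (∑ j ∈ S, w k j) := by
    rw [hMi, Finset.sum_biUnion]
    · refine Finset.sum_congr rfl fun k _ => Finset.sum_congr rfl fun S hS => ?_
      rw [Mi, Finset.mem_filter] at hS
      obtain ⟨hSM, hiS⟩ := hS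
      rw [hWA k S hSM i hiS]
      congr 1
      exact Finset.sum_congr rfl fun j hj => (hWA k S hSM j hj).symm
    · intro k _ l _ hkl
      exact Finset.disjoint_filter_filter (hdisj k l hkl)
  -- assemble
  have hterm : ∀ k : Fin p, ((Mset (q k) (w k)).card : ℝ) * CM (q k) (w k) i
      = ∑ S ∈ Mi (q k) (w k) i, w k i / (∑ j ∈ S, w k j) := by
    intro k
    rw [CM]
    by_cases hc : (Mset (q k) (w k)).card = 0
    · have hMe : Mset (q k) (w k) = ∅ := Finset.card_eq_zero.1 hc
      have : Mi (q k) (w k) i = ∅ := by rw [Mi, hMe]; rfl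
      rw [this, hc]
      simp
    · field_simp
  rw [CM, hsumMi]
  rw [Finset.sum_congr rfl fun k _ => (hterm k).symm]
  rw [one_div, inv_mul_eq_div]
end
end

section
/- The HCM power index satisfies HCM-weighted mergeability: if [q^1;w^1],...,[q^p;w^p] are WM-mergeable weighted majority games with WM-union [q^⋎;w^⋎], then HCM(q^⋎;w^⋎) = (Σ_{k=1}^p HCM(q^k;w^k) · Σ_{i∈N} |M_i(q^k;w^k)| w^k_i) / (Σ_{i∈N} |M_i(q^⋎;w^⋎)| w^⋎_i). -/
open scoped Classical

noncomputable section

lemma mem_Mset' {ι : Type*} [Fintype ι] {q : ℝ} {w : ι → ℝ} {S : Finset ι} :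
    S ∈ Mset q w ↔ MWC q w S := by simp [Mset]

lemma weight_ne_zero' {ι : Type*} {q : ℝ} {w : ι → ℝ} {S : Finset ι} {i : ι}
    (hS : MWC q w S) (hi : i ∈ S) : w i ≠ 0 := by
  intro h0
  apply hS.2 (S.erase i) (Finset.erase_ssubset hi)
  unfold winning at *
  rw [Finset.sum_erase S h0]
  exact hS.1

lemma key_numerator {ι : Type*} [Fintype ι] {p : ℕ} (hp : 1 < p)
    (q : Fin p → ℝ) (w : Fin p → ι → ℝ) (qU : ℝ) (wU : ι → ℝ)
    (hWMG : ∀ k, WMG (q k) (w k)) (hm : Mergeable q w qU wU) (i : ι) :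
    ((Mi qU wU i).card : ℝ) * wU i = ∑ k, ((Mi (q k) (w k) i).card : ℝ) * w k i := by
  have hple : 0 < p := by omega
  haveI : Nonempty (Fin p) := ⟨⟨0, hple⟩⟩
  obtain ⟨⟨hqmem, hqlb⟩, hwgr⟩ := hm.1
  have hqe : ∀ k, q k = qU := by
    obtain ⟨k0, hk0⟩ := hqmem
    intro k
    rw [← hk0]
    exact hm.2.1 k k0
  have hwle : ∀ k j, w k j ≤ wU j := fun k j => (hwgr j).2 ⟨k, rfl⟩
  -- weights of players in minimal winning coalitions agree with the union weight
  have hA : ∀ k S, S ∈ Mset (q k) (w k) → ∀ j ∈ S, w k j = wU j := by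
    intro k S hS j hj
    rw [mem_Mset'] at hS
    have hne := weight_ne_zero' hS hj
    obtain ⟨l, hl⟩ := (hwgr j).1
    have hl' : w l j = wU j := hl
    by_cases h : w k j = w l j
    · rw [h, hl']
    · rcases hm.2.2.1 j k l h with h0 | h0
      · exact absurd h0 hne
      · exfalso
        have h1 : wU j = 0 := by rw [← hl', h0]
        have h2 := hwle k j
        have h3 := lt_of_le_of_ne ((hWMG k).2.1 j) (Ne.symm hne)
        linarith
  -- every MWC of the union is a MWC of some component game
  have hsub : ∀ S ∈ Mset qU wU, ∃ k, S ∈ Mset (q k) (w k) := by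
    intro S hS
    rw [mem_Mset'] at hS
    have hwin : ∃ k, winning (q k) (w k) S := by
      by_contra h
      push_neg at h
      have hlose : ∀ k, ∑ j ∈ S, w k j < q k := fun k => lt_of_not_ge (h k)
      by_cases hu : S = Finset.univ
      · exact h (Classical.arbitrary _) (by rw [hu]; exact (hWMG _).2.2)
      · exact absurd hS.1 (not_le.mpr (hm.2.2.2.1 S hu hlose))
    obtain ⟨k, hk⟩ := hwin
    refine ⟨k, mem_Mset'.mpr ⟨hk, ?_⟩⟩
    intro T hT hwT
    apply hS.2 T hT
    unfold winning at *
    calc qU = q k := (hqe k).symm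
      _ ≤ ∑ j ∈ T, w k j := hwT
      _ ≤ ∑ j ∈ T, wU j := Finset.sum_le_sum (fun j _ => hwle k j)
  -- counting: the component Mset's partition the union Mset
  set t : Fin p → Finset (Finset ι) := fun k => Mset (q k) (w k) with ht
  set B : Finset (Finset ι) := Finset.univ.biUnion t with hB
  have htk : ∀ k, t k ⊆ B := fun k => Finset.subset_biUnion_of_mem t (Finset.mem_univ k)
  have hBsub : Mset qU wU ⊆ B := by
    intro S hS
    obtain ⟨k, hk⟩ := hsub S hS
    exact Finset.mem_biUnion.2 ⟨k, Finset.mem_univ _, hk⟩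
  have hcard : (Mset qU wU).card = ∑ k, (t k).card := hm.2.2.2.2
  have hB1 : B.card ≤ ∑ k, (t k).card := Finset.card_biUnion_le
  have hBeq : Mset qU wU = B :=
    Finset.eq_of_subset_of_card_le hBsub (by rw [hcard]; exact hB1)
  have hfilter : ∀ k, B.filter (fun S => S ∈ t k) = t k := by
    intro k
    rw [Finset.filter_mem_eq_inter, Finset.inter_eq_right]
    exact htk k
  have hdouble : ∑ S ∈ B, (Finset.univ.filter (fun k => S ∈ t k)).card
      = ∑ k, (t k).card := by
    have h1 : ∀ S : Finset ι, (Finset.univ.filter (fun k => S ∈ t k)).card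
        = ∑ k, if S ∈ t k then 1 else 0 := fun S => Finset.card_filter _ _
    simp_rw [h1]
    rw [Finset.sum_comm]
    refine Finset.sum_congr rfl fun k _ => ?_
    rw [← Finset.card_filter, hfilter]
  have hc1 : ∀ S ∈ B, (Finset.univ.filter (fun k => S ∈ t k)).card = 1 := by
    have hge : ∀ S ∈ B, 1 ≤ (Finset.univ.filter (fun k => S ∈ t k)).card := by
      intro S hS
      obtain ⟨k, _, hk⟩ := Finset.mem_biUnion.1 hS
      exact Finset.card_pos.mpr ⟨k, Finset.mem_filter.2 ⟨Finset.mem_univ _, hk⟩⟩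
    by_contra h
    push_neg at h
    obtain ⟨S0, hS0, hne⟩ := h
    have hlt : ∑ S ∈ B, (1 : ℕ)
        < ∑ S ∈ B, (Finset.univ.filter (fun k => S ∈ t k)).card :=
      Finset.sum_lt_sum hge ⟨S0, hS0, lt_of_le_of_ne (hge S0 hS0) (Ne.symm hne)⟩
    rw [Finset.sum_const, smul_eq_mul, mul_one, hdouble, ← hcard, hBeq] at hlt
    omega
  -- the sum identity with g S = if i ∈ S then wU i else 0
  have hLHS : ((Mi qU wU i).card : ℝ) * wU i
      = ∑ S ∈ Mset qU wU, (if i ∈ S then wU i else 0) := by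
    rw [← Finset.sum_filter]
    show _ = ∑ S ∈ Mi qU wU i, wU i
    rw [Finset.sum_const, nsmul_eq_mul]
  have hRHS : ∀ k, ((Mi (q k) (w k) i).card : ℝ) * w k i
      = ∑ S ∈ t k, (if i ∈ S then wU i else 0) := by
    intro k
    rw [← Finset.sum_filter]
    show _ = ∑ S ∈ Mi (q k) (w k) i, wU i
    have h2 : ∀ S ∈ Mi (q k) (w k) i, wU i = w k i := by
      intro S hS
      obtain ⟨hS1, hS2⟩ := Finset.mem_filter.1 hS
      exact (hA k S hS1 i hS2).symm
    rw [Finset.sum_congr rfl h2, Finset.sum_const, nsmul_eq_mul]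
  have hmid : ∑ k, ∑ S ∈ t k, (if i ∈ S then wU i else 0)
      = ∑ S ∈ B, (if i ∈ S then wU i else 0) := by
    have h1 : ∀ k, ∑ S ∈ t k, (if i ∈ S then wU i else 0)
        = ∑ S ∈ B, if S ∈ t k then (if i ∈ S then wU i else 0) else 0 := by
      intro k
      conv_lhs => rw [← hfilter k]
      exact Finset.sum_filter _ _
    simp_rw [h1]
    rw [Finset.sum_comm]
    refine Finset.sum_congr rfl fun S hS => ?_
    rw [← Finset.sum_filter, Finset.sum_const, hc1 S hS, one_smul]
  rw [hLHS, hBeq, ← hmid]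
  exact Finset.sum_congr rfl fun k _ => (hRHS k).symm

theorem HCM_HCMw {ι : Type*} [Fintype ι] {p : ℕ} (hp : 1 < p)
    (q : Fin p → ℝ) (w : Fin p → ι → ℝ) (qU : ℝ) (wU : ι → ℝ)
    (hWMG : ∀ k, WMG (q k) (w k)) (hm : Mergeable q w qU wU) :
    ∀ i, HCM qU wU i =
      (∑ k, HCM (q k) (w k) i * ∑ j, ((Mi (q k) (w k) j).card : ℝ) * w k j) /
        (∑ j, ((Mi qU wU j).card : ℝ) * wU j) := by
  intro i
  have hnum := key_numerator hp q w qU wU hWMG hm i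
  have hterm : ∀ k, HCM (q k) (w k) i * ∑ j, ((Mi (q k) (w k) j).card : ℝ) * w k j
      = ((Mi (q k) (w k) i).card : ℝ) * w k i := by
    intro k
    by_cases hD : (∑ j, ((Mi (q k) (w k) j).card : ℝ) * w k j) = 0
    · have hnn : ∀ j ∈ Finset.univ, 0 ≤ ((Mi (q k) (w k) j).card : ℝ) * w k j :=
        fun j _ => mul_nonneg (Nat.cast_nonneg _) ((hWMG k).2.1 j)
      have hz := (Finset.sum_eq_zero_iff_of_nonneg hnn).1 hD i (Finset.mem_univ i)
      rw [hD, mul_zero, hz]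
    · unfold HCM
      rw [div_mul_cancel₀ _ hD]
  calc HCM qU wU i
      = (((Mi qU wU i).card : ℝ) * wU i) / (∑ j, ((Mi qU wU j).card : ℝ) * wU j) := rfl
    _ = (∑ k, ((Mi (q k) (w k) i).card : ℝ) * w k i) /
        (∑ j, ((Mi qU wU j).card : ℝ) * wU j) := by rw [hnum]
    _ = _ := by rw [Finset.sum_congr rfl fun k _ => (hterm k).symm]
end
end

section
/- For any game with M(q;w) = {S_1,...,S_m}, the decomposition games [q;w^k] defined by w^k_i = w_i if i ∈ S_k or M_i(q;w) = ∅ and w^k_i = 0 otherwise, each have exactly one minimal winning coalition, namely S_k. -/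
open scoped Classical

noncomputable section

theorem decomposition_unique_MWC {ι : Type*} [Fintype ι] (q : ℝ) (w : ι → ℝ)
    (h : WMG q w) (S : Finset ι) (hS : S ∈ Mset q w) :
    Mset q (fun i => if i ∈ S ∨ Mi q w i = ∅ then w i else 0) = {S} := by
  set w' : ι → ℝ := fun i => if i ∈ S ∨ Mi q w i = ∅ then w i else 0 with hw'def
  obtain ⟨hq, hwnn, hgrand⟩ := h
  have hSmwc : MWC q w S := (Finset.mem_filter.mp hS).2
  have hw'le : ∀ i, w' i ≤ w i := by
    intro i; by_cases hi : i ∈ S ∨ Mi q w i = ∅ <;> simp [w', hi, hwnn i]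
  have hsum_eq : ∀ T : Finset ι, T ⊆ S → ∑ i ∈ T, w' i = ∑ i ∈ T, w i := by
    intro T hT
    refine Finset.sum_congr rfl fun i hi => ?_
    simp [w', Or.inl (hT hi)]
  have hSmwc' : MWC q w' S := by
    constructor
    · unfold winning; rw [hsum_eq S (le_refl S)]; exact hSmwc.1
    · intro T hT hTwin
      exact hSmwc.2 T hT (by unfold winning at hTwin ⊢; rwa [hsum_eq T hT.subset] at hTwin)
  ext T
  simp only [Mset, Finset.mem_filter, Finset.mem_univ, true_and, Finset.mem_singleton]
  constructor
  · rintro ⟨hTwin, hTmin⟩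
    -- every element of T satisfies the condition
    have hcond : ∀ i ∈ T, i ∈ S ∨ Mi q w i = ∅ := by
      intro i hi
      by_contra hc
      apply hTmin (T.erase i) (Finset.erase_ssubset hi)
      have : ∑ j ∈ T, w' j = ∑ j ∈ T.erase i, w' j := by
        rw [← Finset.add_sum_erase T w' hi]
        simp [w', hc]
      unfold winning at hTwin ⊢
      rwa [this] at hTwin
    -- T is winning under w
    have hTwinw : winning q w T :=
      le_trans hTwin (Finset.sum_le_sum fun i _ => hw'le i)
    -- a winning coalition contains a MWC
    have hexists : ∀ U : Finset ι, winning q w U → ∃ V ⊆ U, MWC q w V := by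
      intro U
      induction U using Finset.strongInduction with
      | _ U ih =>
        intro hU
        by_cases hmin : ∀ V ⊂ U, ¬ winning q w V
        · exact ⟨U, le_refl U, hU, hmin⟩
        · push_neg at hmin
          obtain ⟨V, hV, hVwin⟩ := hmin
          obtain ⟨W, hWV, hW⟩ := ih V hV hVwin
          exact ⟨W, hWV.trans hV.subset, hW⟩
    obtain ⟨U, hUT, hUmwc⟩ := hexists T hTwinw
    have hUS : U ⊆ S := by
      intro i hi
      rcases hcond i (hUT hi) with h1 | h1
      · exact h1
      · exfalso
        have : U ∈ Mi q w i := by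
          simp [Mi, Mset, Finset.mem_filter, hUmwc, hi]
        rw [h1] at this
        exact absurd this (Finset.notMem_empty U)
    have hUwin' : winning q w' U := by
      unfold winning; rw [hsum_eq U hUS]; exact hUmwc.1
    have hUT' : U = T := by
      by_contra hne
      exact hTmin U (lt_of_le_of_ne hUT hne) hUwin'
    subst hUT'
    -- now U ⊆ S and U is MWC of w; show U = S
    by_contra hne
    exact hSmwc.2 U (lt_of_le_of_ne hUS hne) hUmwc.1
  · rintro rfl; exact hSmwc'
end
end

section
/- For any game with M(q;w) = {S_1,...,S_m} and m > 1, the decomposition games [q;w^k] (with w^k_i = w_i if i ∈ S_k or i is null in [q;w], else w^k_i = 0) are WM-mergeable and their WM-union game equals [q;w]. -/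
open scoped Classical

noncomputable section

lemma exists_mwc {ι : Type*} (q : ℝ) (w : ι → ℝ) :
    ∀ T : Finset ι, winning q w T → ∃ U, U ⊆ T ∧ MWC q w U := by
  intro T
  induction T using Finset.strongInductionOn with
  | _ T ih =>
    intro hT
    by_cases hmin : ∀ T' ⊂ T, ¬ winning q w T'
    · exact ⟨T, le_refl T, hT, hmin⟩
    · push_neg at hmin
      obtain ⟨T', hT', hw⟩ := hmin
      obtain ⟨U, hU, hM⟩ := ih T' hT' hw
      exact ⟨U, hU.trans hT'.subset, hM⟩

theorem decomposition_mergeable {ι : Type*} [Fintype ι] (q : ℝ) (w : ι → ℝ)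
    (h : WMG q w) {m : ℕ} (hm : 1 < m) (S : Fin m → Finset ι)
    (hinj : Function.Injective S) (hS : Mset q w = Finset.univ.image S) :
    Mergeable (fun _ : Fin m => q)
      (fun k i => if i ∈ S k ∨ Mi q w i = ∅ then w i else 0) q w := by
  obtain ⟨hq, hwnn, hgrand⟩ := h
  set w' : Fin m → ι → ℝ := fun k i => if i ∈ S k ∨ Mi q w i = ∅ then w i else 0 with hw'
  have hle : ∀ k i, w' k i ≤ w i := by
    intro k i; simp only [hw']; split
    · exact le_refl _
    · exact hwnn i
  have hnn : ∀ k i, 0 ≤ w' k i := by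
    intro k i; simp only [hw']; split
    · exact hwnn i
    · exact le_refl _
  have hSk : ∀ k, MWC q w (S k) := by
    intro k
    have : S k ∈ Mset q w := hS ▸ Finset.mem_image_of_mem S (Finset.mem_univ k)
    exact (Finset.mem_filter.mp this).2
  have hsum : ∀ k, ∑ i ∈ S k, w' k i = ∑ i ∈ S k, w i := by
    intro k
    refine Finset.sum_congr rfl fun i hi => ?_
    simp only [hw']; rw [if_pos (Or.inl hi)]
  -- every minimal winning coalition of w is some S k
  have hmwc_eq : ∀ U : Finset ι, MWC q w U → ∃ k, U = S k := by
    intro U hU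
    have : U ∈ Mset q w := Finset.mem_filter.mpr ⟨Finset.mem_univ _, hU⟩
    rw [hS] at this
    obtain ⟨k, _, hk⟩ := Finset.mem_image.mp this
    exact ⟨k, hk.symm⟩
  -- key: Mset q (w' k) = {S k}
  have hMk : ∀ k, Mset q (w' k) = {S k} := by
    intro k
    apply Finset.eq_singleton_iff_unique_mem.mpr
    constructor
    · refine Finset.mem_filter.mpr ⟨Finset.mem_univ _, ?_, ?_⟩
      · show q ≤ _
        rw [hsum k]; exact (hSk k).1
      · intro T hT hwin
        exact (hSk k).2 T hT (le_trans hwin (Finset.sum_le_sum fun i _ => hle k i))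
    · intro T hT
      have hT' := (Finset.mem_filter.mp hT).2
      obtain ⟨hTw, hTmin⟩ := hT'
      -- the restriction of T to the support equals T
      set T' := T.filter (fun i => i ∈ S k ∨ Mi q w i = ∅) with hT'def
      have hsub : T' ⊆ T := Finset.filter_subset _ _
      have hsumT : ∑ i ∈ T', w' k i = ∑ i ∈ T, w' k i := by
        refine Finset.sum_subset hsub fun i hi hni => ?_
        have : ¬ (i ∈ S k ∨ Mi q w i = ∅) := by
          intro hp; exact hni (Finset.mem_filter.mpr ⟨hi, hp⟩)
        simp only [hw']; rw [if_neg this]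
      have hTT : T' = T := by
        by_contra hne
        exact hTmin T' (lt_of_le_of_ne hsub hne) (by show q ≤ _; rw [hsumT]; exact hTw)
      have hpred : ∀ i ∈ T, i ∈ S k ∨ Mi q w i = ∅ := by
        intro i hi
        have : i ∈ T' := hTT ▸ hi
        exact (Finset.mem_filter.mp this).2
      have hTwin : winning q w T := by
        refine le_trans hTw (le_of_eq ?_)
        refine Finset.sum_congr rfl fun i hi => ?_
        simp only [hw']; rw [if_pos (hpred i hi)]
      obtain ⟨U, hUT, hUmwc⟩ := exists_mwc q w T hTwin
      obtain ⟨l, hl⟩ := hmwc_eq U hUmwc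
      have hUsub : U ⊆ S k := by
        intro i hi
        rcases hpred i (hUT hi) with h1 | h1
        · exact h1
        · exfalso
          have : U ∈ Mi q w i := Finset.mem_filter.mpr
            ⟨Finset.mem_filter.mpr ⟨Finset.mem_univ _, hUmwc⟩, hi⟩
          rw [h1] at this
          exact absurd this (Finset.notMem_empty _)
      have hUeq : U = S k := by
        by_contra hne
        exact (hSk k).2 U (lt_of_le_of_ne hUsub hne) hUmwc.1
      have hSkT : S k ⊆ T := hUeq ▸ hUT
      by_contra hne
      refine hTmin (S k) (lt_of_le_of_ne hSkT (Ne.symm hne)) ?_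
      show q ≤ _
      rw [hsum k]; exact (hSk k).1
  have hMknonempty : ∀ i, Mi q w i ≠ ∅ → ∃ k, i ∈ S k := by
    intro i hi
    obtain ⟨U, hU⟩ := Finset.nonempty_iff_ne_empty.mpr hi
    have hmem := Finset.mem_filter.mp hU
    obtain ⟨k, hk⟩ := hmwc_eq U (Finset.mem_filter.mp hmem.1).2
    exact ⟨k, hk ▸ hmem.2⟩
  refine ⟨⟨⟨⟨⟨0, Nat.lt_of_lt_of_le Nat.zero_lt_one hm.le⟩, rfl⟩, fun x hx => by
      obtain ⟨k, hk⟩ := hx; exact hk.le⟩, ?_⟩, fun k l => rfl, ?_, ?_, ?_⟩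
  · -- wU i greatest
    intro i
    constructor
    · by_cases hnull : Mi q w i = ∅
      · exact ⟨⟨0, Nat.lt_of_lt_of_le Nat.zero_lt_one hm.le⟩, by
          simp only [hw']; rw [if_pos (Or.inr hnull)]⟩
      · obtain ⟨k, hk⟩ := hMknonempty i hnull
        exact ⟨k, by simp only [hw']; rw [if_pos (Or.inl hk)]⟩
    · rintro x ⟨k, rfl⟩
      exact hle k i
  · -- discrepant weights
    intro i k l hne
    simp only [hw'] at hne ⊢
    by_cases h1 : i ∈ S k ∨ Mi q w i = ∅ <;> by_cases h2 : i ∈ S l ∨ Mi q w i = ∅ <;>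
      simp [h1, h2] at hne ⊢
  · -- losing in all implies losing in union
    intro T _ hlose
    by_contra hwin
    push_neg at hwin
    obtain ⟨U, hUT, hUmwc⟩ := exists_mwc q w T hwin
    obtain ⟨k, rfl⟩ := hmwc_eq U hUmwc
    refine absurd (hlose k) (not_lt.mpr ?_)
    calc q ≤ ∑ i ∈ S k, w' k i := by rw [hsum k]; exact hUmwc.1
      _ ≤ ∑ i ∈ T, w' k i :=
        Finset.sum_le_sum_of_subset_of_nonneg hUT fun i _ _ => hnn k i
  · -- cardinality
    have : ∀ k : Fin m, (Mset q (w' k)).card = 1 := by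
      intro k; rw [hMk k]; simp
    rw [hS, Finset.card_image_of_injective _ hinj, Finset.card_univ, Fintype.card_fin]
    rw [Finset.sum_congr rfl fun k _ => this k]
    simp
end
end
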